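/- arXiv:2603.29558 — 2 statements merged into one kernel-verified Lean document; each statement's English description precedes it below -/
import Mathlib

section
/- If a group G acts on a tree X without inversion and g, h ∈ G are commuting elements each fixing at least one vertex of X, then there is a point of X fixed by both g and h. -/
private lemma list_fix_of_map_eq {α : Type*} {f : α → α} :
    ∀ (l : List α), l.map f = l → ∀ x ∈ l, f x = x := by
  intro l
  induction l with
  | nil => simp
  | cons a t ih =>
    intro hmap x hx
    simp only [List.map_cons, List.cons.injEq] at hmap
    rcases List.mem_cons.mp hx with rfl | hx'
    · exact hmap.1
    · exact ih hmap.2 x hx'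

/-- If `g` fixes some vertex `v` of a tree, then for any `x` and any path `q`
from `x` to `g • x`, some vertex on `q` is fixed by `g`. -/
private lemma fixed_vertex_on_path {V G : Type*} [Group G] [MulAction G V]
    (X : SimpleGraph V) (hX : X.IsTree)
    (hpres : ∀ (g : G) (v w : V), X.Adj v w → X.Adj (g • v) (g • w))
    (g : G) {v : V} (hv : g • v = v) :
    ∀ {x : V} (_ : X.Walk x v) (q : X.Walk x (g • x)), q.IsPath →
      ∃ m ∈ q.support, g • m = m := by
  haveI := Classical.decEq V
  intro x p
  induction p with
  | nil =>
    intro q _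
    exact ⟨_, q.start_mem_support, hv⟩
  | @cons x x' _ hadj p' ih =>
    intro q hq
    by_cases hgx : g • x = x
    · exact ⟨x, q.start_mem_support, hgx⟩
    -- build a walk from x' to g • x' through q
    have hadj' : X.Adj (g • x) (g • x') := hpres g x x' hadj
    set W : X.Walk x' (g • x') := SimpleGraph.Walk.cons hadj.symm (q.concat hadj')
    obtain ⟨m, hm, hfix⟩ := ih hv W.bypass W.bypass_isPath
    have hmW : m ∈ W.support := W.support_bypass_subset hm
    have hmW' : m = x' ∨ m ∈ q.support ∨ m = g • x' := by
      simp only [W, SimpleGraph.Walk.support_cons, SimpleGraph.Walk.support_concat,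
        List.concat_eq_append, List.mem_cons, List.mem_append, List.mem_singleton] at hmW
      tauto
    -- reduce the case m = g • x' to m = x'
    have hx'case : g • x' = x' → ∃ m ∈ q.support, g • m = m := by
      intro hx'
      -- the path x, x', g•x is the unique path from x to g•x, hence equals q
      have hadj2 : X.Adj x' (g • x) := by
        have := (hpres g x x' hadj).symm
        rwa [hx'] at this
      set q2 : X.Walk x (g • x) :=
        SimpleGraph.Walk.cons hadj (SimpleGraph.Walk.cons hadj2 SimpleGraph.Walk.nil)
      have hq2 : q2.IsPath := by
        have h1 : x ≠ x' := hadj.ne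
        have h2 : x ≠ g • x := fun hh => hgx hh.symm
        have h3 : x' ≠ g • x := by
          intro hh
          have : g • x' = g • x := by rw [hx', hh]
          exact hadj.ne (smul_left_cancel g this).symm
        simp only [q2, SimpleGraph.Walk.isPath_def, SimpleGraph.Walk.support_cons,
          SimpleGraph.Walk.support_nil]
        simp [h1, h2, h3]
      have : q = q2 := ((hX.existsUnique_path x (g • x)).unique hq hq2)
      refine ⟨x', ?_, hx'⟩
      rw [this]
      simp [q2]
    rcases hmW' with rfl | hmq | rfl
    · exact hx'case hfix
    · exact ⟨m, hmq, hfix⟩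
    · have : g • x' = x' := smul_left_cancel g hfix
      exact hx'case this

/-- If a group `G` acts on a tree `X` without inversion and `g, h` are commuting
elements each fixing a vertex, then some vertex is fixed by both. -/
theorem commuting_elliptics_common_fixed_point {V G : Type*} [Group G] [MulAction G V]
    (X : SimpleGraph V) (hX : X.IsTree)
    (hpres : ∀ (g : G) (v w : V), X.Adj v w → X.Adj (g • v) (g • w))
    (hnoinv : ∀ (g : G) (v w : V), X.Adj v w → ¬ (g • v = w ∧ g • w = v))
    (g h : G) (hcomm : g * h = h * g)
    (hg : ∃ v : V, g • v = v) (hh : ∃ v : V, h • v = v) :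
    ∃ v : V, g • v = v ∧ h • v = v := by
  obtain ⟨v, hv⟩ := hg
  obtain ⟨w, hw⟩ := hh
  -- graph homomorphism given by h
  let φ : X →g X := ⟨fun u => h • u, fun {a b} hab => hpres h a b hab⟩
  have hφinj : Function.Injective φ := MulAction.injective h
  -- a walk from w to v, and the canonical path from w to g • w
  obtain ⟨pw⟩ := hX.isConnected.preconnected w v
  obtain ⟨q, hq, -⟩ := hX.existsUnique_path w (g • w)
  -- h fixes g • w
  have hgw : h • (g • w) = g • w := by
    rw [smul_smul, ← hcomm, mul_smul, hw]
  -- h maps q to a path from w to g • w, which must equal q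
  have hmapPath : ((q.map φ).copy hw hgw).IsPath :=
    (SimpleGraph.Walk.isPath_copy _ hw hgw).mpr
      (SimpleGraph.Walk.map_isPath_of_injective hφinj hq)
  have hqeq : (q.map φ).copy hw hgw = q :=
    (hX.existsUnique_path w (g • w)).unique hmapPath hq
  have hsupp : q.support.map (fun u => h • u) = q.support := by
    have := congrArg SimpleGraph.Walk.support hqeq
    rwa [SimpleGraph.Walk.support_copy, SimpleGraph.Walk.support_map] at this
  have hfixh : ∀ u ∈ q.support, h • u = u := list_fix_of_map_eq _ hsupp
  -- g fixes some vertex on q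
  obtain ⟨m, hmq, hmg⟩ := fixed_vertex_on_path X hX hpres g hv pw q hq
  exact ⟨m, hmg, hfixh m hmq⟩
end

section
/- Let G be a group acting on a tree without inversion such that every edge stabilizer is free and cyclonormal in G (g⁻¹Hg ∩ H cyclic for g ∉ H, where H is the stabilizer). If y ∈ G is loxodromic, then the pointwise stabilizer of Axis(y) intersected with C_G(y) is a cyclic group. -/
/-- The translation length of `g`: the minimal displacement of a vertex. -/
noncomputable def transLen {V G : Type*} [Group G] [MulAction G V]
    (X : SimpleGraph V) (g : G) : ℕ :=
  sInf (Set.range fun v : V => X.dist v (g • v))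

/-- The axis of `g`: the set of vertices of minimal displacement. -/
def axisSet {V G : Type*} [Group G] [MulAction G V] (X : SimpleGraph V) (g : G) : Set V :=
  {v | X.dist v (g • v) = transLen X g}

private lemma getVert_map_aux {V : Type*} {X : SimpleGraph V} (f : X →g X) :
    ∀ {u v : V} (p : X.Walk u v) (i : ℕ), (p.map f).getVert i = f (p.getVert i) := by
  intro u v p
  induction p with
  | nil =>
    intro i
    show (SimpleGraph.Walk.nil.getVert i) = _
    rw [SimpleGraph.Walk.getVert_of_length_le _ (by simp),
      SimpleGraph.Walk.getVert_of_length_le _ (by simp)]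
  | cons h q ih =>
    intro i
    cases i with
    | zero => simp
    | succ n => simpa using ih n

/-- Let `G` act on a tree without inversion, with every edge stabilizer a free group
which is cyclonormal in `G` (its intersection with any conjugate by `g ∉ H` is cyclic).
If `y` is loxodromic, then the pointwise stabilizer of `Axis(y)` intersected with the
centralizer `C_G(y)` is cyclic. -/
theorem pointwise_axis_stabilizer_cyclic {V G : Type*} [Group G] [MulAction G V]
    (X : SimpleGraph V) (hX : X.IsTree)
    (hpres : ∀ (g : G) (v w : V), X.Adj v w → X.Adj (g • v) (g • w))
    (hnoinv : ∀ (g : G) (v w : V), X.Adj v w → ¬ (g • v = w ∧ g • w = v))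
    (hfree : ∀ v w : V, X.Adj v w →
      ∃ ι : Type, Nonempty
        (↥(MulAction.stabilizer G v ⊓ MulAction.stabilizer G w) ≃* FreeGroup ι))
    (hcyclo : ∀ v w : V, X.Adj v w →
      ∀ g : G, g ∉ MulAction.stabilizer G v ⊓ MulAction.stabilizer G w →
        IsCyclic ↥(((MulAction.stabilizer G v ⊓ MulAction.stabilizer G w).comap
            (MulAut.conj g).toMonoidHom) ⊓
          (MulAction.stabilizer G v ⊓ MulAction.stabilizer G w)))
    (y : G) (hy : ∀ v : V, y • v ≠ v) :
    IsCyclic ↥((⨅ v ∈ axisSet X y, MulAction.stabilizer G v) ⊓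
      Subgroup.centralizer {y}) := by
  classical
  have hconn : X.Connected := hX.isConnected
  have : Nonempty V := hconn.nonempty
  -- the infimum in `transLen` is attained at some vertex `v`
  have hmem : transLen X y ∈ Set.range fun v : V => X.dist v (y • v) :=
    Nat.sInf_mem (Set.range_nonempty _)
  obtain ⟨v, hv⟩ := hmem
  have hvax : v ∈ axisSet X y := hv
  -- a geodesic path from `v` to `y • v`
  obtain ⟨p, hp, hplen⟩ := hconn.exists_path_of_dist v (y • v)
  have hpos : 0 < p.length := by
    rw [hplen]
    exact hconn.pos_dist_of_ne (Ne.symm (hy v))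
  set w : V := p.getVert 1 with hw
  have hadj : X.Adj v w := by
    have := p.adj_getVert_succ (i := 0) hpos
    simpa using this
  -- `y` is not in the edge stabilizer
  have hynot : y ∉ MulAction.stabilizer G v ⊓ MulAction.stabilizer G w := by
    intro h
    exact hy v h.1
  have hcyc := hcyclo v w hadj y hynot
  -- every element of our group fixes `v` and `w` and is conj-invariant
  have hle : (⨅ u ∈ axisSet X y, MulAction.stabilizer G u) ⊓ Subgroup.centralizer {y} ≤
      ((MulAction.stabilizer G v ⊓ MulAction.stabilizer G w).comap
            (MulAut.conj y).toMonoidHom) ⊓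
          (MulAction.stabilizer G v ⊓ MulAction.stabilizer G w) := by
    rintro n ⟨hn1, hn2⟩
    have hnv : n • v = v := by
      have := Subgroup.mem_iInf.mp hn1 v
      exact (Subgroup.mem_iInf.mp this) hvax
    have hn2' : n ∈ Subgroup.centralizer ({y} : Set G) := hn2
    have hcomm : y * n = n * y := Subgroup.mem_centralizer_iff.mp hn2' y rfl
    have hnyv : n • (y • v) = y • v := by
      rw [smul_smul, ← hcomm, mul_smul, hnv]
    -- `n` fixes `w`, the second vertex of the geodesic `p`
    have hnw : n • w = w := by
      -- graph homomorphism given by `n`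
      let f : X →g X := ⟨fun u => n • u, fun h => hpres n _ _ h⟩
      have hinj : Function.Injective f := MulAction.injective n
      have hq : ((p.map f).copy hnv hnyv).IsPath := by
        rw [SimpleGraph.Walk.isPath_copy]
        exact SimpleGraph.Walk.map_isPath_of_injective hinj hp
      have huniq := hX.existsUnique_path v (y • v)
      have heq : (p.map f).copy hnv hnyv = p :=
        huniq.unique hq hp
      have := congrArg (fun q => q.getVert 1) heq
      simpa [SimpleGraph.Walk.getVert_copy, getVert_map_aux, f] using this
    refine ⟨?_, hnv, hnw⟩
    have hconj : (MulAut.conj y) n = n := by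
      simp only [MulAut.conj_apply]
      rw [hcomm, mul_assoc, mul_inv_cancel, mul_one]
    refine Subgroup.mem_comap.mpr ?_
    show (MulAut.conj y) n ∈ _
    rw [hconj]
    exact ⟨hnv, hnw⟩
  -- a subgroup of a cyclic group is cyclic
  have e := Subgroup.subgroupOfEquivOfLe hle
  haveI : IsCyclic ↥(((⨅ u ∈ axisSet X y, MulAction.stabilizer G u) ⊓
      Subgroup.centralizer {y}).subgroupOf
      (((MulAction.stabilizer G v ⊓ MulAction.stabilizer G w).comap
            (MulAut.conj y).toMonoidHom) ⊓
          (MulAction.stabilizer G v ⊓ MulAction.stabilizer G w))) :=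
    Subgroup.isCyclic _
  exact isCyclic_of_surjective e.toMonoidHom e.surjective
end
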